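/- For any two orthonormal vectors c, c' in ℝ³ and any real 3×3-column matrix R (viewed as a linear map ℝ³ → ℝᵐ), ‖Rc‖² + ‖Rc'‖² is at most the sum of the two largest eigenvalues of RᵀR. -/
import Mathlib


open Matrix

/-- For any two orthonormal vectors `c, c'` in `ℝ³` and any real matrix `R` with three
columns (a linear map `ℝ³ → ℝᵐ`), `‖Rc‖² + ‖Rc'‖²` is at most the sum of the two largest
eigenvalues of `RᵀR` (given here via an orthonormal eigenbasis `e` with eigenvalues
`u 0 ≥ u 1 ≥ u 2`). -/
theorem stmt_3 {m : ℕ} (R : Matrix (Fin m) (Fin 3) ℝ) (u : Fin 3 → ℝ)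
    (e : Fin 3 → Fin 3 → ℝ)
    (horth : ∀ i j, e i ⬝ᵥ e j = if i = j then (1 : ℝ) else 0)
    (heig : ∀ i, (Rᵀ * R).mulVec (e i) = u i • e i)
    (hu01 : u 1 ≤ u 0) (hu12 : u 2 ≤ u 1)
    (c c' : Fin 3 → ℝ) (hc : c ⬝ᵥ c = 1) (hc' : c' ⬝ᵥ c' = 1) (hcc' : c ⬝ᵥ c' = 0) :
    (R.mulVec c) ⬝ᵥ (R.mulVec c) + (R.mulVec c') ⬝ᵥ (R.mulVec c') ≤ u 0 + u 1 := by
  have h1 : (Matrix.of e) * (Matrix.of e)ᵀ = 1 := by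
    ext i j
    simpa [Matrix.mul_apply, Matrix.one_apply, dotProduct] using horth i j
  have h2 : (Matrix.of e)ᵀ * (Matrix.of e) = 1 := mul_eq_one_comm.mp h1
  have hEE : ∀ k j, (∑ i, e i k * e i j) = if k = j then (1:ℝ) else 0 := by
    intro k j
    have := congrFun (congrFun h2 k) j
    simpa [Matrix.mul_apply, Matrix.one_apply, Matrix.transpose_apply] using this
  have hexp : ∀ v : Fin 3 → ℝ, v = ∑ i, (v ⬝ᵥ e i) • e i := by
    intro v; funext j
    simp only [Finset.sum_apply, Pi.smul_apply, smul_eq_mul, dotProduct]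
    calc v j = ∑ k, v k * (if k = j then 1 else 0) := by simp
    _ = ∑ k, v k * (∑ i, e i k * e i j) := by simp [hEE]
    _ = ∑ i, (∑ k, v k * e i k) * e i j := by
        simp only [Finset.mul_sum, Finset.sum_mul, mul_assoc]
        rw [Finset.sum_comm]
  have hquad : ∀ v : Fin 3 → ℝ,
      (R.mulVec v) ⬝ᵥ (R.mulVec v) = ∑ i, u i * (v ⬝ᵥ e i)^2 := by
    intro v
    have h3 : (R.mulVec v) ⬝ᵥ (R.mulVec v) = v ⬝ᵥ (Rᵀ * R).mulVec v := by
      conv_rhs => rw [← Matrix.mulVec_mulVec, Matrix.dotProduct_mulVec,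
        Matrix.vecMul_transpose]
    have h4 : (Rᵀ * R).mulVec v = (v ⬝ᵥ e 0) • (u 0 • e 0) + (v ⬝ᵥ e 1) • (u 1 • e 1)
        + (v ⬝ᵥ e 2) • (u 2 • e 2) := by
      conv_lhs => rw [hexp v, Fin.sum_univ_three]
      rw [Matrix.mulVec_add, Matrix.mulVec_add, Matrix.mulVec_smul, Matrix.mulVec_smul,
        Matrix.mulVec_smul, heig, heig, heig]
    rw [h3, h4, Fin.sum_univ_three]
    simp only [dotProduct_add, dotProduct_smul, smul_eq_mul]
    ring
  have hsum : ∀ (v w : Fin 3 → ℝ),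
      v ⬝ᵥ w = ∑ i, (v ⬝ᵥ e i) * (w ⬝ᵥ e i) := by
    intro v w
    conv_lhs => rw [hexp w, Fin.sum_univ_three]
    rw [Fin.sum_univ_three]
    simp only [dotProduct_add, dotProduct_smul, smul_eq_mul]
    ring
  have hA : ∑ i, (c ⬝ᵥ e i) * (c ⬝ᵥ e i) = 1 := by rw [← hsum c c, hc]
  have hB : ∑ i, (c' ⬝ᵥ e i) * (c' ⬝ᵥ e i) = 1 := by rw [← hsum c' c', hc']
  have hbes : ∀ i, (c ⬝ᵥ e i) ^ 2 + (c' ⬝ᵥ e i) ^ 2 ≤ 1 := by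
    intro i
    have h0 : (0:ℝ) ≤ (e i - (c ⬝ᵥ e i) • c - (c' ⬝ᵥ e i) • c')
        ⬝ᵥ (e i - (c ⬝ᵥ e i) • c - (c' ⬝ᵥ e i) • c') := by
      simp only [dotProduct]
      exact Finset.sum_nonneg fun k _ => mul_self_nonneg _
    have h11 : e i ⬝ᵥ e i = 1 := by simpa using horth i i
    have hec : e i ⬝ᵥ c = c ⬝ᵥ e i := dotProduct_comm _ _
    have hec' : e i ⬝ᵥ c' = c' ⬝ᵥ e i := dotProduct_comm _ _
    have hc'c : c' ⬝ᵥ c = 0 := by rw [dotProduct_comm]; exact hcc'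
    have hexpand : (e i - (c ⬝ᵥ e i) • c - (c' ⬝ᵥ e i) • c')
        ⬝ᵥ (e i - (c ⬝ᵥ e i) • c - (c' ⬝ᵥ e i) • c')
        = 1 - (c ⬝ᵥ e i) ^ 2 - (c' ⬝ᵥ e i) ^ 2 := by
      simp only [sub_dotProduct, dotProduct_sub, smul_dotProduct,
        dotProduct_smul, smul_eq_mul, h11, hec, hec', hc, hc', hcc', hc'c]
      ring
    linarith [h0.trans_eq hexpand]
  rw [hquad c, hquad c']
  have e0 := hbes 0; have e1 := hbes 1; have e2 := hbes 2
  have h02 : u 2 ≤ u 0 := hu12.trans hu01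
  simp only [Fin.sum_univ_three] at hA hB ⊢
  ring_nf at hA hB
  have hS : ((c ⬝ᵥ e 0) ^ 2 + (c' ⬝ᵥ e 0) ^ 2) + ((c ⬝ᵥ e 1) ^ 2 + (c' ⬝ᵥ e 1) ^ 2)
      + ((c ⬝ᵥ e 2) ^ 2 + (c' ⬝ᵥ e 2) ^ 2) = 2 := by nlinarith [hA, hB]
  have key : u 2 * (2 - (((c ⬝ᵥ e 0) ^ 2 + (c' ⬝ᵥ e 0) ^ 2) + ((c ⬝ᵥ e 1) ^ 2 + (c' ⬝ᵥ e 1) ^ 2)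
      + ((c ⬝ᵥ e 2) ^ 2 + (c' ⬝ᵥ e 2) ^ 2))) = 0 := by rw [hS]; ring
  nlinarith [mul_nonneg (sub_nonneg.mpr h02) (sub_nonneg.mpr e0),
    mul_nonneg (sub_nonneg.mpr hu12) (sub_nonneg.mpr e1), key]
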